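/- Let g ≥ 2, α = 2π/(8g−4), and let w = √(1−cos α) + i√(cos α). Then |w| = 1, and the two solutions z on the unit circle of |(−i√(cos α)/√(1−cos α)) z + e^{i(k−1)α}/√(1−cos α)| = 1 are z = −e^{i(k−1)α} w and z = e^{i(k−1)α} w̄; moreover their product equals e^{i(2k−4g)α}. -/

import Mathlib

/-!
With `a = √(1 - cos α)`, `b = √(cos α)` and `e = e^{i(k-1)α}`, substitute `z = u e` with `|u| = 1`.
The equation becomes `|1 - i b u| = a`, i.e. `1 + b² + 2 b Im u = a² = 1 - b²`, i.e. `Im u = -b`;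
on the unit circle this leaves `u = ±a - i b`, that is `u = -w` or `u = w̄`. The product of the two
endpoints is `-e²`, and since `(4g - 2)α = π` this is `e^{i(2k-2)α - iπ} = e^{i(2k-4g)α}`.
-/

open Complex Real

noncomputable def alphaG (g : ℕ) : ℝ := 2 * Real.pi / (8 * (g : ℝ) - 4)

open ComplexConjugate

lemma norm_ofReal_add_I_mul_ofReal {a b : ℝ} (hab : a ^ 2 + b ^ 2 = 1) :
    ‖(a : ℂ) + I * b‖ = 1 := by
  rw [mul_comm, norm_add_mul_I, hab, Real.sqrt_one]

lemma normSq_one_sub_I_mul_ofReal_mul (b : ℝ) (u : ℂ) :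
    normSq (1 - I * b * u) = 1 + b ^ 2 * normSq u + 2 * b * u.im := by
  simp only [normSq_apply, sub_re, sub_im, one_re, one_im, mul_re, mul_im, I_re, I_im,
    ofReal_re, ofReal_im]
  ring

lemma im_eq_neg_iff_of_norm_eq_one {a b : ℝ} (hab : a ^ 2 + b ^ 2 = 1) {u : ℂ} (hu : ‖u‖ = 1) :
    u.im = -b ↔ u = -((a : ℂ) + I * b) ∨ u = conj ((a : ℂ) + I * b) := by
  constructor
  · intro him
    have hre : u.re ^ 2 = a ^ 2 := by
      have := normSq_eq_norm_sq u
      rw [hu, normSq_apply, him] at this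
      nlinarith
    rcases sq_eq_sq_iff_eq_or_eq_neg.1 hre with h | h
    · right; apply Complex.ext <;> simp [h, him]
    · left; apply Complex.ext <;> simp [h, him]
  · rintro (rfl | rfl) <;> simp

lemma norm_isometric_circle_eq_one_iff {a b : ℝ} (ha : a ≠ 0) (hb : b ≠ 0)
    (hab : a ^ 2 + b ^ 2 = 1) {e z : ℂ} (he : ‖e‖ = 1) (hz : ‖z‖ = 1) :
    ‖(-I * b / a) * z + e / a‖ = 1 ↔
      z = -e * ((a : ℂ) + I * b) ∨ z = e * conj ((a : ℂ) + I * b) := by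
  have he0 : e ≠ 0 := norm_ne_zero_iff.1 (by rw [he]; exact one_ne_zero)
  obtain ⟨u, rfl⟩ : ∃ u, z = u * e :=
    ⟨z * conj e, by rw [mul_assoc, conj_mul', he]; simp⟩
  have hu : ‖u‖ = 1 := by simpa [he] using hz
  have hfactor : (-I * b / a) * (u * e) + e / a = e * (1 - I * b * u) / a := by ring
  calc ‖(-I * b / a) * (u * e) + e / a‖ = 1
      ↔ normSq (1 - I * b * u) = a ^ 2 := by
        rw [hfactor, norm_div, norm_mul, he, one_mul, norm_real, Real.norm_eq_abs,
          div_eq_one_iff_eq (abs_ne_zero.2 ha), normSq_eq_norm_sq, ← sq_abs a]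
        exact (pow_left_inj₀ (norm_nonneg _) (abs_nonneg a) two_ne_zero).symm
    _ ↔ u.im = -b := by
        rw [normSq_one_sub_I_mul_ofReal_mul, normSq_eq_norm_sq, hu]
        constructor
        · intro h
          exact mul_left_cancel₀ hb (by linear_combination h / 2 + hab / 2)
        · intro h
          rw [h]; linear_combination -hab
    _ ↔ u = -((a : ℂ) + I * b) ∨ u = conj ((a : ℂ) + I * b) := im_eq_neg_iff_of_norm_eq_one hab hu
    _ ↔ _ := by
        rw [neg_mul, ← mul_neg, mul_comm e, mul_comm e, mul_left_inj' he0, mul_left_inj' he0]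

lemma neg_mul_mul_conj_eq_neg_sq {w : ℂ} (hw : ‖w‖ = 1) (e : ℂ) :
    (-e * w) * (e * conj w) = -e ^ 2 := by
  have : w * conj w = 1 := by rw [mul_conj', hw]; norm_num
  linear_combination (-e ^ 2) * this

lemma mul_alphaG_eq_pi (g : ℕ) : (4 * (g : ℝ) - 2) * alphaG g = π := by
  have h : ((8 * g - 4 : ℤ) : ℝ) ≠ 0 := Int.cast_ne_zero.2 (by omega)
  push_cast at h
  rw [alphaG, mul_div_assoc', div_eq_iff h]
  ring

lemma alphaG_pos {g : ℕ} (hg : 2 ≤ g) : 0 < alphaG g := by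
  have : (2 : ℝ) ≤ g := by exact_mod_cast hg
  unfold alphaG
  apply div_pos (by positivity)
  linarith

lemma alphaG_lt_pi_div_two {g : ℕ} (hg : 2 ≤ g) : alphaG g < π / 2 := by
  have : (2 : ℝ) ≤ g := by exact_mod_cast hg
  unfold alphaG
  rw [div_lt_div_iff₀ (by linarith) two_pos]
  nlinarith [pi_pos]

lemma cos_alphaG_mem_Ioo {g : ℕ} (hg : 2 ≤ g) : Real.cos (alphaG g) ∈ Set.Ioo 0 1 := by
  have h0 := alphaG_pos hg
  have h1 := alphaG_lt_pi_div_two hg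
  refine ⟨cos_pos_of_mem_Ioo ⟨by linarith, h1⟩, ?_⟩
  simpa using cos_lt_cos_of_nonneg_of_le_pi le_rfl (by linarith) h0

lemma neg_exp_sq_eq_exp_of_mul_eq_pi {g θ : ℂ} (hθ : (4 * g - 2) * θ = π) (k : ℂ) :
    -exp (I * (k - 1) * θ) ^ 2 = exp (I * ((2 * k - 4 * g) * θ)) := by
  calc -exp (I * (k - 1) * θ) ^ 2 = exp (2 * (I * (k - 1) * θ) - π * I) := by
        rw [exp_sub_pi_mul_I, two_mul, Complex.exp_add, sq]
    _ = exp (I * ((2 * k - 4 * g) * θ)) := by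
        congr 1; linear_combination I * hθ

theorem isometric_circle_endpoints (g : ℕ) (hg : 2 ≤ g) (k : ℤ) :
    let α := alphaG g
    let w : ℂ := (Real.sqrt (1 - Real.cos α) : ℂ) + Complex.I * (Real.sqrt (Real.cos α) : ℂ)
    ‖w‖ = 1 ∧
    (∀ z : ℂ, ‖z‖ = 1 →
      (‖((-Complex.I * (Real.sqrt (Real.cos α) : ℂ) / (Real.sqrt (1 - Real.cos α) : ℂ)) * z
          + Complex.exp (Complex.I * ((k : ℂ) - 1) * (α : ℂ)) / (Real.sqrt (1 - Real.cos α) : ℂ))‖ = 1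
        ↔ z = -Complex.exp (Complex.I * ((k : ℂ) - 1) * (α : ℂ)) * w
          ∨ z = Complex.exp (Complex.I * ((k : ℂ) - 1) * (α : ℂ)) * (starRingEnd ℂ) w)) ∧
    (-Complex.exp (Complex.I * ((k : ℂ) - 1) * (α : ℂ)) * w)
        * (Complex.exp (Complex.I * ((k : ℂ) - 1) * (α : ℂ)) * (starRingEnd ℂ) w)
      = Complex.exp (Complex.I * ((2 * (k : ℂ) - 4 * (g : ℂ)) * (α : ℂ))) := by
  intro α w
  obtain ⟨hcos_pos, hcos_lt_one⟩ := cos_alphaG_mem_Ioo hg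
  have hab : √(1 - Real.cos α) ^ 2 + √(Real.cos α) ^ 2 = 1 := by
    rw [sq_sqrt (by linarith), sq_sqrt hcos_pos.le]; ring
  have hw : ‖w‖ = 1 := norm_ofReal_add_I_mul_ofReal hab
  have he : ‖exp (I * ((k : ℂ) - 1) * α)‖ = 1 := by
    rw [norm_exp]; simp
  refine ⟨hw, fun z hz ↦ norm_isometric_circle_eq_one_iff (sqrt_pos.2 (by linarith)).ne'
    (sqrt_pos.2 hcos_pos).ne' hab he hz, ?_⟩
  rw [neg_mul_mul_conj_eq_neg_sq hw]
  exact neg_exp_sq_eq_exp_of_mul_eq_pi (by exact_mod_cast mul_alphaG_eq_pi g) k
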